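/- arXiv:2506.15612 — 7 statements merged into one kernel-verified Lean document; each statement's English description precedes it below -/
import Mathlib

section
/- Let X, X_1, …, X_n be i.i.d. real-valued random variables with E[X] finite and with E[e^{tX}] finite for every t > 0, and set S_n = X_1 + ⋯ + X_n. Then for every real r with r ≥ E[X], P(S_n ≥ n·r) ≤ ( inf_{t>0} e^{−rt}·E[e^{tX}] )^n. -/
open MeasureTheory ProbabilityTheory Real

/-- Chernoff (1952), Theorem 1, right tail: for i.i.d. real random variables with
finite mean and finite mgf for all `t > 0`, and `r ≥ E[X]`,
`P(S_n ≥ n·r) ≤ (inf_{t>0} e^{-rt} E[e^{tX}])^n`. -/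
theorem chernoff_right_tail {Ω : Type*} [MeasurableSpace Ω] (μ : Measure Ω)
    [IsProbabilityMeasure μ] (n : ℕ) (X : Ω → ℝ) (Xs : Fin n → Ω → ℝ)
    (hX : Measurable X) (hXs : ∀ i, Measurable (Xs i))
    (hindep : iIndepFun Xs μ)
    (hident : ∀ i, IdentDistrib (Xs i) X μ μ)
    (hint : Integrable X μ)
    (hmgf : ∀ t : ℝ, 0 < t → Integrable (fun ω => Real.exp (t * X ω)) μ)
    (r : ℝ) (hr : ∫ ω, X ω ∂μ ≤ r) :
    (μ {ω | (n : ℝ) * r ≤ ∑ i, Xs i ω}).toReal ≤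
      (⨅ t : {t : ℝ // 0 < t},
        Real.exp (-r * t.1) * ∫ ω, Real.exp (t.1 * X ω) ∂μ) ^ n := by
  set f : {t : ℝ // 0 < t} → ℝ := fun t => Real.exp (-r * t.1) * ∫ ω, Real.exp (t.1 * X ω) ∂μ
  set x := (μ {ω | (n : ℝ) * r ≤ ∑ i, Xs i ω}).toReal
  have hx0 : 0 ≤ x := ENNReal.toReal_nonneg
  -- each f t is ≥ 0
  have hf0 : ∀ t, 0 ≤ f t := by
    intro t
    refine mul_nonneg (exp_nonneg _) (integral_nonneg fun ω => (exp_nonneg _))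
  -- key pointwise bound
  have key : ∀ t : {t : ℝ // 0 < t}, x ≤ f t ^ n := by
    intro ⟨t, ht⟩
    have hinti : ∀ i : Fin n, Integrable (fun ω => Real.exp (t * Xs i ω)) μ := by
      intro i
      have : IdentDistrib (fun ω => Real.exp (t * Xs i ω)) (fun ω => Real.exp (t * X ω)) μ μ :=
        (hident i).comp (measurable_exp.comp (measurable_const_mul t))
      exact this.integrable_iff.mpr (hmgf t ht)
    have hS : Integrable (fun ω => Real.exp (t * (∑ i, Xs i) ω)) μ :=
      hindep.integrable_exp_mul_sum hXs (fun i _ => hinti i)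
    have h1 : x ≤ Real.exp (-t * ((n:ℝ) * r)) * mgf (∑ i, Xs i) μ t := by
      have := measure_ge_le_exp_mul_mgf (X := ∑ i, Xs i) (μ := μ) ((n:ℝ) * r) ht.le hS
      show μ.real {ω | (n : ℝ) * r ≤ ∑ i, Xs i ω} ≤ _
      simpa using this
    have h2 : mgf (∑ i, Xs i) μ t = (mgf X μ t) ^ n := by
      rw [hindep.mgf_sum hXs]
      have : ∀ i : Fin n, mgf (Xs i) μ t = mgf X μ t := by
        intro i
        unfold mgf
        exact ((hident i).comp (measurable_exp.comp (measurable_const_mul t))).integral_eq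
      simp [this]
    calc x ≤ Real.exp (-t * ((n:ℝ) * r)) * (mgf X μ t) ^ n := h1.trans_eq (by rw [h2])
      _ = f ⟨t, ht⟩ ^ n := by
          simp only [f, mgf]
          rw [mul_pow, ← Real.exp_nat_mul]
          ring_nf
  rcases Nat.eq_zero_or_pos n with hn | hn
  · subst hn
    simp only [pow_zero]
    calc x ≤ (μ Set.univ).toReal := by
            exact ENNReal.toReal_mono (measure_ne_top _ _) (measure_mono (Set.subset_univ _))
      _ = 1 := by simp
  · have hn' : n ≠ 0 := hn.ne'
    have hroot : ∀ t, x ^ ((n:ℝ)⁻¹) ≤ f t := by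
      intro t
      have := Real.rpow_le_rpow hx0 (key t) (by positivity : (0:ℝ) ≤ (n:ℝ)⁻¹)
      rwa [Real.pow_rpow_inv_natCast (hf0 t) hn'] at this
    have hbd : BddBelow (Set.range f) := ⟨0, fun y ⟨t, ht⟩ => ht ▸ hf0 t⟩
    have hinf : x ^ ((n:ℝ)⁻¹) ≤ ⨅ t, f t := le_ciInf hroot
    calc x = (x ^ ((n:ℝ)⁻¹)) ^ n := (Real.rpow_inv_natCast_pow hx0 hn').symm
      _ ≤ (⨅ t, f t) ^ n := pow_le_pow_left₀ (by positivity) hinf n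
end

section
/- Let X, X_1, …, X_n be i.i.d. real-valued random variables with E[X] finite and with E[e^{tX}] finite for every t < 0, and set S_n = X_1 + ⋯ + X_n. Then for every real r with r ≤ E[X], P(S_n ≤ n·r) ≤ ( inf_{t<0} e^{−rt}·E[e^{tX}] )^n. -/
open MeasureTheory ProbabilityTheory Real

/-- Chernoff (1952), Theorem 1, left tail: for i.i.d. real random variables with
finite mean and finite mgf for all `t < 0`, and `r ≤ E[X]`,
`P(S_n ≤ n·r) ≤ (inf_{t<0} e^{-rt} E[e^{tX}])^n`. -/
theorem chernoff_left_tail {Ω : Type*} [MeasurableSpace Ω] (μ : Measure Ω)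
    [IsProbabilityMeasure μ] (n : ℕ) (X : Ω → ℝ) (Xs : Fin n → Ω → ℝ)
    (hX : Measurable X) (hXs : ∀ i, Measurable (Xs i))
    (hindep : iIndepFun Xs μ)
    (hident : ∀ i, IdentDistrib (Xs i) X μ μ)
    (hint : Integrable X μ)
    (hmgf : ∀ t : ℝ, t < 0 → Integrable (fun ω => Real.exp (t * X ω)) μ)
    (r : ℝ) (hr : r ≤ ∫ ω, X ω ∂μ) :
    (μ {ω | ∑ i, Xs i ω ≤ (n : ℝ) * r}).toReal ≤
      (⨅ t : {t : ℝ // t < 0},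
        Real.exp (-r * t.1) * ∫ ω, Real.exp (t.1 * X ω) ∂μ) ^ n := by
  have hne : Nonempty {t : ℝ // t < 0} := ⟨⟨-1, by norm_num⟩⟩
  set g : {t : ℝ // t < 0} → ℝ :=
    fun t => Real.exp (-r * t.1) * ∫ ω, Real.exp (t.1 * X ω) ∂μ with hg
  set P : ℝ := (μ {ω | ∑ i, Xs i ω ≤ (n : ℝ) * r}).toReal with hP
  have hgnonneg : ∀ t, 0 ≤ g t := fun t =>
    mul_nonneg (Real.exp_nonneg _)
      (integral_nonneg fun ω => (Real.exp_nonneg _))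
  -- key pointwise Chernoff bound
  have key : ∀ t : {t : ℝ // t < 0}, P ≤ g t ^ n := by
    rintro ⟨t, ht⟩
    have hidexp : ∀ i, IdentDistrib (fun ω => Real.exp (t * Xs i ω))
        (fun ω => Real.exp (t * X ω)) μ μ :=
      fun i => (hident i).comp (Real.measurable_exp.comp (measurable_const_mul t))
    have hint_i : ∀ i : Fin n, Integrable (fun ω => Real.exp (t * Xs i ω)) μ :=
      fun i => (hidexp i).integrable_iff.mpr (hmgf t ht)
    have hmgf_i : ∀ i : Fin n, mgf (Xs i) μ t = mgf X μ t :=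
      fun i => (hidexp i).integral_eq
    have hintS : Integrable (fun ω => Real.exp (t * (∑ i, Xs i) ω)) μ :=
      hindep.integrable_exp_mul_sum hXs (fun i _ => hint_i i)
    have hset : {ω | ∑ i, Xs i ω ≤ (n : ℝ) * r} =
        {ω | (∑ i, Xs i) ω ≤ (n : ℝ) * r} := by
      ext ω; simp [Finset.sum_apply]
    have hbound := measure_le_le_exp_mul_mgf (X := ∑ i, Xs i) (μ := μ) (t := t)
      ((n : ℝ) * r) ht.le hintS
    rw [hP, hset]
    refine hbound.trans ?_
    have hmgfS : mgf (∑ i, Xs i) μ t = mgf X μ t ^ n := by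
      rw [hindep.mgf_sum hXs]
      simp [hmgf_i]
    rw [hmgfS]
    have hexp : Real.exp (-t * ((n : ℝ) * r)) = Real.exp (-r * t) ^ n := by
      rw [← Real.exp_nat_mul]
      ring_nf
    rw [hexp, ← mul_pow]
    exact le_of_eq (by rw [mgf])
  -- pass to the infimum
  set c : ℝ := ⨅ t, g t with hc
  have htend : Filter.Tendsto (fun δ : ℝ => (c + δ) ^ n) (nhdsWithin 0 (Set.Ioi 0))
      (nhds (c ^ n)) := by
    have h1 : Filter.Tendsto (fun δ : ℝ => c + δ) (nhdsWithin 0 (Set.Ioi 0)) (nhds c) := by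
      have h2 : Filter.Tendsto (fun δ : ℝ => c + δ) (nhds 0) (nhds (c + 0)) :=
        tendsto_const_nhds.add Filter.tendsto_id
      simpa using h2.mono_left nhdsWithin_le_nhds
    exact (continuous_pow n).continuousAt.tendsto.comp h1
  refine ge_of_tendsto htend ?_
  filter_upwards [self_mem_nhdsWithin] with δ (hδ : (0:ℝ) < δ)
  obtain ⟨t, htlt⟩ := exists_lt_of_ciInf_lt (show c < c + δ from lt_add_of_pos_right _ hδ)
  exact (key t).trans (pow_le_pow_left₀ (hgnonneg t) htlt.le n)
end

section
/- For every real r with p < r < 1, P(S_n ≥ r·n) ≤ exp(−D(r‖p)·n) = [ (p/r)^r · ((1−p)/(1−r))^{1−r} ]^n. -/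
open MeasureTheory ProbabilityTheory Real

/-- Chernoff bound for the right tail of a sum of i.i.d. Bernoulli(p) random variables:
for `p < r < 1`, `P(S_n ≥ r·n) ≤ exp(-D(r‖p)·n) = [(p/r)^r ((1-p)/(1-r))^(1-r)]^n`. -/
theorem bernoulli_right_tail_kl {Ω : Type*} [MeasurableSpace Ω] (μ : Measure Ω)
    [IsProbabilityMeasure μ] (n : ℕ) (p : ℝ) (hp0 : 0 < p) (hp1 : p < 1)
    (X : Fin n → Ω → ℝ) (hX : ∀ i, Measurable (X i))
    (hindep : iIndepFun X μ)
    (hone : ∀ i, μ {ω | X i ω = 1} = ENNReal.ofReal p)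
    (hzero : ∀ i, μ {ω | X i ω = 0} = ENNReal.ofReal (1 - p))
    (r : ℝ) (hpr : p < r) (hr1 : r < 1) :
    (μ {ω | r * n ≤ ∑ i, X i ω}).toReal ≤
      Real.exp (-(r * Real.log (r / p) + (1 - r) * Real.log ((1 - r) / (1 - p))) * n) ∧
    Real.exp (-(r * Real.log (r / p) + (1 - r) * Real.log ((1 - r) / (1 - p))) * n) =
      ((p / r) ^ r * ((1 - p) / (1 - r)) ^ (1 - r)) ^ n := by
  have hr0 : 0 < r := hp0.trans hpr
  have h1r : 0 < 1 - r := by linarith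
  have h1p : 0 < 1 - p := by linarith
  set D : ℝ := r * Real.log (r / p) + (1 - r) * Real.log ((1 - r) / (1 - p)) with hD
  set t : ℝ := Real.log (r * (1 - p) / (p * (1 - r))) with ht_def
  have harg : 1 < r * (1 - p) / (p * (1 - r)) := by
    rw [lt_div_iff₀ (by positivity)]
    nlinarith
  have ht0 : 0 < t := Real.log_pos harg
  have hexpt : Real.exp t = r * (1 - p) / (p * (1 - r)) := Real.exp_log (by positivity)
  -- measurability of level sets
  have hA : ∀ i, MeasurableSet {ω | X i ω = 1} := fun i => (hX i) (measurableSet_singleton 1)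
  have hB : ∀ i, MeasurableSet {ω | X i ω = 0} := fun i => (hX i) (measurableSet_singleton 0)
  have hdisj : ∀ i, Disjoint {ω | X i ω = 1} {ω | X i ω = 0} := by
    intro i
    rw [Set.disjoint_left]
    intro ω h1 h0
    simp only [Set.mem_setOf_eq] at h1 h0
    rw [h1] at h0
    norm_num at h0
  have hU : ∀ i, μ ({ω | X i ω = 1} ∪ {ω | X i ω = 0}) = 1 := by
    intro i
    rw [measure_union (hdisj i) (hB i), hone i, hzero i,
      ← ENNReal.ofReal_add hp0.le h1p.le]
    norm_num
  have hU_ae : ∀ i, ∀ᵐ ω ∂μ, ω ∈ {ω | X i ω = 1} ∪ {ω | X i ω = 0} := by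
    intro i
    have hc : μ ({ω | X i ω = 1} ∪ {ω | X i ω = 0})ᶜ = 0 := by
      rw [measure_compl ((hA i).union (hB i)) (measure_ne_top _ _), hU i, measure_univ,
        tsub_self]
    rw [ae_iff]
    exact hc
  -- a.e. representation of exp (t * X i)
  have hae : ∀ i, (fun ω => Real.exp (t * X i ω)) =ᵐ[μ]
      (Set.indicator {ω | X i ω = 1} (fun _ => Real.exp t)
        + Set.indicator {ω | X i ω = 0} (fun _ => (1 : ℝ))) := by
    intro i
    filter_upwards [hU_ae i] with ω hω
    rcases hω with h1 | h0
    · have h0 : ω ∉ {ω | X i ω = 0} := by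
        simp only [Set.mem_setOf_eq] at h1 ⊢
        rw [h1]; norm_num
      have h1' : X i ω = 1 := h1
      simp [Set.indicator_of_mem h1, Set.indicator_of_notMem h0, h1']
    · by_cases h1 : ω ∈ {ω | X i ω = 1}
      · have h1' : X i ω = 1 := h1
        have h0' : X i ω = 0 := h0
        rw [h1'] at h0'; norm_num at h0'
      · have h0' : X i ω = 0 := h0
        simp [Set.indicator_of_notMem h1, Set.indicator_of_mem h0, h0']
  have hint : ∀ i, Integrable (fun ω => Real.exp (t * X i ω)) μ := by
    intro i
    exact (((integrable_const _).indicator (hA i)).add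
      ((integrable_const _).indicator (hB i))).congr (hae i).symm
  have hmgf : ∀ i, mgf (X i) μ t = p * Real.exp t + (1 - p) := by
    intro i
    rw [mgf, integral_congr_ae (hae i)]
    have := integral_add ((integrable_const (μ := μ) (Real.exp t)).indicator (hA i))
      ((integrable_const (μ := μ) (1 : ℝ)).indicator (hB i))
    simp only [Pi.add_apply]
    rw [this, integral_indicator_const (μ := μ) _ (hA i), integral_indicator_const (μ := μ) _ (hB i),
      measureReal_def, measureReal_def, hone i, hzero i, ENNReal.toReal_ofReal hp0.le, ENNReal.toReal_ofReal h1p.le]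
    simp [smul_eq_mul]
  have hval : p * Real.exp t + (1 - p) = (1 - p) / (1 - r) := by
    rw [hexpt]; field_simp; ring
  -- Chernoff
  have hcher := measure_ge_le_exp_mul_mgf (μ := μ) (X := ∑ i, X i) (r * n) ht0.le
      (hindep.integrable_exp_mul_sum hX (fun i _ => hint i))
  rw [hindep.mgf_sum hX Finset.univ] at hcher
  simp only [Finset.sum_apply] at hcher
  have hprod : ∏ i : Fin n, mgf (X i) μ t = ((1 - p) / (1 - r)) ^ n := by
    rw [Finset.prod_congr rfl (fun i _ => (hmgf i).trans hval)]
    simp [div_pow]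
  rw [hprod] at hcher
  -- log identities
  have hlog1 : t = Real.log (r / p) + Real.log ((1 - p) / (1 - r)) := by
    rw [ht_def, ← Real.log_mul (by positivity) (by positivity), div_mul_div_comm]
  have hlog2 : Real.log ((1 - r) / (1 - p)) = -Real.log ((1 - p) / (1 - r)) := by
    rw [← Real.log_inv, inv_div]
  have hkey : Real.exp (-t * r) * ((1 - p) / (1 - r)) = Real.exp (-D) := by
    have h2 : (1 - p) / (1 - r) = Real.exp (Real.log ((1 - p) / (1 - r))) :=
      (Real.exp_log (by positivity)).symm
    rw [h2, ← Real.exp_add]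
    congr 1
    rw [hD, hlog1, hlog2]; ring
  have hrhs : Real.exp (-t * (r * n)) * ((1 - p) / (1 - r)) ^ n = Real.exp (-D * n) := by
    have : -t * (r * n) = (n : ℝ) * (-t * r) := by ring
    rw [this, Real.exp_nat_mul, ← mul_pow, hkey, mul_comm (-D) (n : ℝ), Real.exp_nat_mul]
  constructor
  · calc (μ {ω | r * n ≤ ∑ i, X i ω}).toReal
        ≤ Real.exp (-t * (r * n)) * ((1 - p) / (1 - r)) ^ n := hcher
      _ = Real.exp (-D * n) := hrhs
  · have hexpD : Real.exp (-D) = (p / r) ^ r * ((1 - p) / (1 - r)) ^ (1 - r) := by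
      have hlog3 : Real.log (r / p) = -Real.log (p / r) := by
        rw [← Real.log_inv, inv_div]
      have h1 : -D = Real.log (p / r) * r + Real.log ((1 - p) / (1 - r)) * (1 - r) := by
        rw [hD, hlog3, hlog2]; ring
      rw [h1, Real.exp_add, ← Real.rpow_def_of_pos (by positivity),
        ← Real.rpow_def_of_pos (by positivity)]
    rw [mul_comm (-D) (n : ℝ), Real.exp_nat_mul, hexpD]
end

section
/- Let 0 < p < 1, let n be a positive integer, and let k be an integer with p < k/n < 1. Writing B(n,p,k) = ∑_{i=k}^{n} C(n,i)·p^i·(1−p)^{n−i} for the upper binomial tail and r = k/n, we have B(n,p,k) ≤ [ (p/r)^r · ((1−p)/(1−r))^{1−r} ]^n. -/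
open Finset Real

/-- Chvátal's form of the Chernoff bound for the upper binomial tail: for `0 < p < 1`,
`0 < n`, and an integer `k` with `p < k/n < 1`, writing `r = k/n`,
`∑_{i=k}^n C(n,i) p^i (1-p)^(n-i) ≤ [(p/r)^r ((1-p)/(1-r))^(1-r)]^n`. -/
theorem binomial_tail_chvatal (n : ℕ) (hn : 0 < n) (p : ℝ) (hp0 : 0 < p) (hp1 : p < 1)
    (k : ℕ) (hk : p < (k : ℝ) / n) (hk1 : (k : ℝ) / n < 1) :
    ∑ i ∈ Finset.Icc k n, (n.choose i : ℝ) * p ^ i * (1 - p) ^ (n - i) ≤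
      ((p / ((k : ℝ) / n)) ^ ((k : ℝ) / n) *
        ((1 - p) / (1 - (k : ℝ) / n)) ^ (1 - (k : ℝ) / n)) ^ n := by
  have hn' : (0:ℝ) < n := Nat.cast_pos.mpr hn
  set r : ℝ := (k:ℝ)/n with hr
  have hr0 : 0 < r := hp0.trans hk
  have hr1 : r < 1 := hk1
  have h1p : (0:ℝ) < 1 - p := by linarith
  have h1r : (0:ℝ) < 1 - r := by linarith
  set t : ℝ := r*(1-p)/(p*(1-r)) with ht
  have ht0 : 0 < t := by positivity
  have ht1 : 1 < t := by
    rw [ht, lt_div_iff₀ (by positivity)]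
    nlinarith [hk]
  have hkn : k ≤ n := by
    by_contra h
    push_neg at h
    have hnk : (n:ℝ) ≤ (k:ℝ) := by exact_mod_cast h.le
    have : (1:ℝ) ≤ r := by
      rw [hr, le_div_iff₀ hn']; linarith
    linarith
  have hrn : r * (n:ℝ) = (k:ℝ) := by
    rw [hr]; field_simp
  have h1rn : (1 - r) * (n:ℝ) = ((n - k : ℕ):ℝ) := by
    rw [Nat.cast_sub hkn, hr]; field_simp
  -- termwise bound and binomial theorem
  have step1 : ∑ i ∈ Finset.Icc k n, (n.choose i : ℝ) * p ^ i * (1 - p) ^ (n - i) ≤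
      (1 / t ^ k) * (p * t + (1 - p)) ^ n := by
    have h1 : ∑ i ∈ Finset.Icc k n, (n.choose i : ℝ) * p ^ i * (1 - p) ^ (n - i) ≤
        ∑ i ∈ Finset.Icc k n, (1 / t ^ k) * ((p * t) ^ i * (1 - p) ^ (n - i) * (n.choose i : ℝ)) := by
      apply Finset.sum_le_sum
      intro i hi
      rw [Finset.mem_Icc] at hi
      have htk : t ^ k ≤ t ^ i := pow_le_pow_right₀ ht1.le hi.1
      rw [mul_pow]
      rw [div_mul_eq_mul_div, le_div_iff₀ (by positivity), one_mul]
      have : (n.choose i : ℝ) * p ^ i * (1 - p) ^ (n - i) * t ^ k ≤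
          (n.choose i : ℝ) * p ^ i * (1 - p) ^ (n - i) * t ^ i := by
        apply mul_le_mul_of_nonneg_left htk (by positivity)
      calc (n.choose i : ℝ) * p ^ i * (1 - p) ^ (n - i) * t ^ k
          ≤ (n.choose i : ℝ) * p ^ i * (1 - p) ^ (n - i) * t ^ i := this
        _ = p ^ i * t ^ i * (1 - p) ^ (n - i) * (n.choose i : ℝ) := by ring
    have h2 : ∑ i ∈ Finset.Icc k n, (1 / t ^ k) * ((p * t) ^ i * (1 - p) ^ (n - i) * (n.choose i : ℝ)) ≤
        ∑ i ∈ Finset.range (n+1), (1 / t ^ k) * ((p * t) ^ i * (1 - p) ^ (n - i) * (n.choose i : ℝ)) := by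
      apply Finset.sum_le_sum_of_subset_of_nonneg
      · intro i hi
        rw [Finset.mem_Icc] at hi
        rw [Finset.mem_range]
        omega
      · intro i _ _
        positivity
    calc _ ≤ _ := h1
      _ ≤ _ := h2
      _ = (1 / t ^ k) * (p * t + (1 - p)) ^ n := by
          rw [← Finset.mul_sum, add_pow]
  have hpt : p * t + (1 - p) = (1 - p) / (1 - r) := by
    rw [ht]; field_simp; ring
  have hRHS : ((p / r) ^ r * ((1 - p) / (1 - r)) ^ (1 - r)) ^ n =
      (p / r) ^ k * ((1 - p) / (1 - r)) ^ (n - k) := by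
    rw [mul_pow, ← Real.rpow_natCast ((p/r) ^ r) n, ← Real.rpow_natCast (((1-p)/(1-r)) ^ (1-r)) n,
      ← Real.rpow_mul (by positivity), ← Real.rpow_mul (by positivity), hrn, h1rn,
      Real.rpow_natCast, Real.rpow_natCast]
  rw [hRHS]
  rw [hpt] at step1
  refine step1.trans (le_of_eq ?_)
  have hsplit : ((1 - p) / (1 - r)) ^ n = ((1 - p) / (1 - r)) ^ k * ((1 - p) / (1 - r)) ^ (n - k) := by
    rw [← pow_add, Nat.add_sub_cancel' hkn]
  rw [hsplit, ← mul_assoc]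
  congr 1
  rw [one_div, ← inv_pow, ← mul_pow]
  congr 1
  rw [ht]
  field_simp
end

section
/- For every real r with 0 < r < p, P(S_n ≤ r·n) ≤ exp(−D(r‖p)·n) = [ (p/r)^r · ((1−p)/(1−r))^{1−r} ]^n. -/
open MeasureTheory ProbabilityTheory Real

lemma bern_mgf {Ω : Type*} [MeasurableSpace Ω] (μ : Measure Ω) [IsProbabilityMeasure μ]
    (p : ℝ) (hp0 : 0 ≤ p) (hp1 : p ≤ 1) (Y : Ω → ℝ) (hY : Measurable Y)
    (hone : μ {ω | Y ω = 1} = ENNReal.ofReal p)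
    (hzero : μ {ω | Y ω = 0} = ENNReal.ofReal (1 - p)) (t : ℝ) :
    Integrable (fun ω => Real.exp (t * Y ω)) μ ∧
      mgf Y μ t = p * Real.exp t + (1 - p) := by
  set A : Set Ω := {ω | Y ω = 1} with hA
  set B : Set Ω := {ω | Y ω = 0} with hB
  have hAm : MeasurableSet A := hY (measurableSet_singleton 1)
  have hBm : MeasurableSet B := hY (measurableSet_singleton 0)
  have hdis : Disjoint A B := by
    rw [Set.disjoint_left]
    intro ω h1 h0
    simp only [hA, hB, Set.mem_setOf_eq] at h1 h0
    norm_num [h1] at h0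
  have hcup : μ (A ∪ B) = 1 := by
    rw [measure_union hdis hBm, hone, hzero, ← ENNReal.ofReal_add hp0 (by linarith)]
    norm_num
  have hae : ∀ᵐ ω ∂μ, ω ∈ A ∪ B := by
    rw [ae_iff]
    rw [show {ω | ¬ ω ∈ A ∪ B} = (A ∪ B)ᶜ from rfl, measure_compl (hAm.union hBm) (measure_ne_top _ _), hcup]
    simp
  set g : Ω → ℝ := fun ω => A.indicator (fun _ => Real.exp t) ω + B.indicator (fun _ => 1) ω
    with hg
  have haeg : (fun ω => Real.exp (t * Y ω)) =ᵐ[μ] g := by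
    filter_upwards [hae] with ω hω
    rcases hω with h1 | h0
    · have h1' : Y ω = 1 := h1
      have hnb : ω ∉ B := fun h0 => by
        simp only [hB, Set.mem_setOf_eq] at h0; norm_num [h1'] at h0
      simp [hg, Set.indicator_of_mem h1, Set.indicator_of_notMem hnb, h1']
    · have h0' : Y ω = 0 := h0
      have hna : ω ∉ A := fun h1 => by
        simp only [hA, Set.mem_setOf_eq] at h1; norm_num [h0'] at h1
      simp [hg, Set.indicator_of_mem h0, Set.indicator_of_notMem hna, h0']
  have hgint : Integrable g μ := by
    exact (((integrable_const (Real.exp t)).indicator hAm).add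
      ((integrable_const (1 : ℝ)).indicator hBm))
  have hint : Integrable (fun ω => Real.exp (t * Y ω)) μ := hgint.congr haeg.symm
  refine ⟨hint, ?_⟩
  have : mgf Y μ t = ∫ ω, g ω ∂μ := integral_congr_ae haeg
  rw [this, hg]
  rw [integral_add ((integrable_const (Real.exp t)).indicator hAm)
      ((integrable_const (1 : ℝ)).indicator hBm),
    integral_indicator_const _ hAm, integral_indicator_const _ hBm, measureReal_def, measureReal_def, hone, hzero,
    ENNReal.toReal_ofReal hp0, ENNReal.toReal_ofReal (by linarith : (0:ℝ) ≤ 1 - p)]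
  simp [mul_comm]

/-- Chernoff bound for the left tail of a sum of i.i.d. Bernoulli(p) random variables:
for `0 < r < p`, `P(S_n ≤ r·n) ≤ exp(-D(r‖p)·n) = [(p/r)^r ((1-p)/(1-r))^(1-r)]^n`. -/
theorem bernoulli_left_tail_kl {Ω : Type*} [MeasurableSpace Ω] (μ : Measure Ω)
    [IsProbabilityMeasure μ] (n : ℕ) (p : ℝ) (hp0 : 0 < p) (hp1 : p < 1)
    (X : Fin n → Ω → ℝ) (hX : ∀ i, Measurable (X i))
    (hindep : iIndepFun X μ)
    (hone : ∀ i, μ {ω | X i ω = 1} = ENNReal.ofReal p)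
    (hzero : ∀ i, μ {ω | X i ω = 0} = ENNReal.ofReal (1 - p))
    (r : ℝ) (hr0 : 0 < r) (hrp : r < p) :
    (μ {ω | ∑ i, X i ω ≤ r * n}).toReal ≤
      Real.exp (-(r * Real.log (r / p) + (1 - r) * Real.log ((1 - r) / (1 - p))) * n) ∧
    Real.exp (-(r * Real.log (r / p) + (1 - r) * Real.log ((1 - r) / (1 - p))) * n) =
      ((p / r) ^ r * ((1 - p) / (1 - r)) ^ (1 - r)) ^ n := by
  have hr1 : r < 1 := lt_trans hrp hp1
  have h1p : 0 < 1 - p := by linarith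
  have h1r : 0 < 1 - r := by linarith
  -- log expansions
  have hlog1 : Real.log (r / p) = Real.log r - Real.log p := Real.log_div hr0.ne' hp0.ne'
  have hlog2 : Real.log ((1 - r) / (1 - p)) = Real.log (1 - r) - Real.log (1 - p) :=
    Real.log_div h1r.ne' h1p.ne'
  have hlog3 : Real.log ((1 - p) / (1 - r)) = Real.log (1 - p) - Real.log (1 - r) :=
    Real.log_div h1p.ne' h1r.ne'
  have hlog4 : Real.log (p / r) = Real.log p - Real.log r := Real.log_div hp0.ne' hr0.ne'
  constructor
  · set t : ℝ := Real.log (r * (1 - p) / (p * (1 - r))) with ht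
    have harg_pos : 0 < r * (1 - p) / (p * (1 - r)) := by positivity
    have harg_lt1 : r * (1 - p) / (p * (1 - r)) < 1 := by
      rw [div_lt_one (by positivity)]; nlinarith
    have htneg : t ≤ 0 := le_of_lt (Real.log_neg harg_pos harg_lt1)
    have hexpt : Real.exp t = r * (1 - p) / (p * (1 - r)) := Real.exp_log harg_pos
    have hmgf := fun i => bern_mgf μ p hp0.le hp1.le (X i) (hX i) (hone i) (hzero i) t
    have hint : Integrable (fun ω => Real.exp (t * (∑ i, X i) ω)) μ :=
      hindep.integrable_exp_mul_sum hX (fun i _ => (hmgf i).1)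
    have hbound := measure_le_le_exp_mul_mgf (μ := μ) (X := ∑ i, X i) (r * n) htneg hint
    simp only [Finset.sum_apply] at hbound
    have hms : mgf (∑ i, X i) μ t = ((1 - p) / (1 - r)) ^ n := by
      rw [hindep.mgf_sum hX Finset.univ]
      have hc : ∀ i : Fin n, mgf (X i) μ t = (1 - p) / (1 - r) := by
        intro i
        rw [(hmgf i).2, hexpt]
        field_simp
        ring
      simp [hc, div_pow]
    rw [hms] at hbound
    refine hbound.trans_eq ?_
    have hpow : ((1 - p) / (1 - r)) ^ n = Real.exp ((n : ℝ) * Real.log ((1 - p) / (1 - r))) := by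
      rw [Real.exp_nat_mul, Real.exp_log (by positivity)]
    rw [hpow, ← Real.exp_add]
    congr 1
    have htexp : t = Real.log r + Real.log (1 - p) - (Real.log p + Real.log (1 - r)) := by
      rw [ht, Real.log_div (by positivity) (by positivity),
        Real.log_mul hr0.ne' h1p.ne', Real.log_mul hp0.ne' h1r.ne']
    rw [htexp, hlog1, hlog2, hlog3]
    ring
  · have ha : (p / r) ^ r * ((1 - p) / (1 - r)) ^ (1 - r) =
        Real.exp (Real.log (p / r) * r + Real.log ((1 - p) / (1 - r)) * (1 - r)) := by
      rw [Real.exp_add, Real.rpow_def_of_pos (by positivity), Real.rpow_def_of_pos (by positivity)]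
    rw [ha, ← Real.exp_nat_mul]
    congr 1
    rw [hlog1, hlog2, hlog3, hlog4]
    ring
end

section
/- Let X_1, …, X_n be independent real-valued random variables with 0 ≤ X_i ≤ 1 almost surely for each i. Set S_n = X_1 + ⋯ + X_n and p = E[S_n]/n, and assume 0 < p < 1. Then for every h with 0 < h < 1−p, P(S_n ≥ (p+h)·n) ≤ [ (p/(p+h))^{p+h} · ((1−p)/(1−p−h))^{1−p−h} ]^n. -/
open MeasureTheory ProbabilityTheory Real

/-- Hoeffding (1963), Theorem 1: for independent random variables with `0 ≤ X_i ≤ 1`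
almost surely, `p = E[S_n]/n` with `0 < p < 1`, and `0 < h < 1 - p`,
`P(S_n ≥ (p+h)·n) ≤ [(p/(p+h))^(p+h) ((1-p)/(1-p-h))^(1-p-h)]^n`. -/
theorem hoeffding_theorem_one {Ω : Type*} [MeasurableSpace Ω] (μ : Measure Ω)
    [IsProbabilityMeasure μ] (n : ℕ) (X : Fin n → Ω → ℝ)
    (hX : ∀ i, Measurable (X i))
    (hindep : iIndepFun X μ)
    (hbound : ∀ i, ∀ᵐ ω ∂μ, X i ω ∈ Set.Icc (0 : ℝ) 1)
    (p : ℝ) (hp : p = (∫ ω, ∑ i, X i ω ∂μ) / n)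
    (hp0 : 0 < p) (hp1 : p < 1)
    (h : ℝ) (hh0 : 0 < h) (hh1 : h < 1 - p) :
    (μ {ω | (p + h) * n ≤ ∑ i, X i ω}).toReal ≤
      ((p / (p + h)) ^ (p + h) * ((1 - p) / (1 - p - h)) ^ (1 - p - h)) ^ n := by
  -- basic positivity facts
  have hq0 : 0 < 1 - p - h := by linarith
  have hph0 : 0 < p + h := by linarith
  have h1p : 0 < 1 - p := by linarith
  have hn : (n : ℝ) ≠ 0 := by
    intro h0
    rw [h0, div_zero] at hp
    exact absurd hp hp0.ne'
  have hnpos : 0 < (n : ℝ) := by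
    rcases Nat.eq_zero_or_pos n with h0 | h0
    · exact absurd (by exact_mod_cast congrArg Nat.cast h0) hn
    · exact_mod_cast h0
  -- the optimal tilt parameter
  set t : ℝ := Real.log ((p + h) * (1 - p) / ((1 - p - h) * p)) with ht_def
  have hratio1 : 1 < (p + h) * (1 - p) / ((1 - p - h) * p) := by
    rw [lt_div_iff₀ (by positivity)]
    nlinarith
  have ht : 0 < t := Real.log_pos hratio1
  have het : Real.exp t = (p + h) * (1 - p) / ((1 - p - h) * p) :=
    Real.exp_log (by positivity)
  have het1 : 1 < Real.exp t := by rw [het]; exact hratio1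
  -- integrability of X i and of exp (t * X i)
  have hXint : ∀ i, Integrable (X i) μ := by
    intro i
    refine Integrable.mono' (integrable_const (1 : ℝ)) (hX i).aestronglyMeasurable ?_
    filter_upwards [hbound i] with ω hω
    rw [Real.norm_eq_abs, abs_le]
    exact ⟨by linarith [hω.1], hω.2⟩
  have hexpint : ∀ i, Integrable (fun ω => Real.exp (t * X i ω)) μ := by
    intro i
    refine Integrable.mono' (integrable_const (Real.exp t))
      ((hX i).const_mul t).exp.aestronglyMeasurable ?_
    filter_upwards [hbound i] with ω hω
    rw [Real.norm_eq_abs, abs_of_pos (Real.exp_pos _)]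
    exact Real.exp_le_exp.2 (by nlinarith [hω.1, hω.2])
  -- the means
  set m : Fin n → ℝ := fun i => ∫ ω, X i ω ∂μ with hm_def
  have hm0 : ∀ i, 0 ≤ m i := by
    intro i
    exact integral_nonneg_of_ae ((hbound i).mono fun ω hω => hω.1)
  have hmsum : ∑ i, m i = p * n := by
    have : (∫ ω, ∑ i, X i ω ∂μ) = ∑ i, m i :=
      integral_finset_sum _ fun i _ => hXint i
    rw [← this]
    rw [hp, div_mul_cancel₀ _ hn]
  -- mgf of each X i is bounded by 1 + m i * (exp t - 1)
  have hmgf_le : ∀ i, mgf (X i) μ t ≤ 1 + m i * (Real.exp t - 1) := by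
    intro i
    have hpt : ∀ᵐ ω ∂μ, Real.exp (t * X i ω) ≤ 1 + X i ω * (Real.exp t - 1) := by
      filter_upwards [hbound i] with ω hω
      have hx0 := hω.1
      have hx1 := hω.2
      have := convexOn_exp.2 (Set.mem_univ (0 : ℝ)) (Set.mem_univ t)
        (by linarith : (0:ℝ) ≤ 1 - X i ω) hx0 (by ring)
      simp only [smul_eq_mul, mul_zero, zero_add, Real.exp_zero] at this
      calc Real.exp (t * X i ω) = Real.exp (X i ω * t) := by ring_nf
        _ ≤ (1 - X i ω) * 1 + X i ω * Real.exp t := this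
        _ = 1 + X i ω * (Real.exp t - 1) := by ring
    have hint2 : Integrable (fun ω => 1 + X i ω * (Real.exp t - 1)) μ :=
      (integrable_const (1:ℝ)).add ((hXint i).mul_const _)
    calc mgf (X i) μ t = ∫ ω, Real.exp (t * X i ω) ∂μ := rfl
      _ ≤ ∫ ω, (1 + X i ω * (Real.exp t - 1)) ∂μ :=
          integral_mono_ae (hexpint i) hint2 hpt
      _ = 1 + m i * (Real.exp t - 1) := by
          rw [integral_add (integrable_const _) ((hXint i).mul_const _),
            integral_const, integral_mul_const]
          simp [hm_def]
  have hmgf_nonneg : ∀ i, 0 ≤ mgf (X i) μ t := fun i => mgf_nonneg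
  -- AM-GM: product of mgfs ≤ ((1-p)/(1-p-h))^n after plugging in exp t
  have hMpos : (0:ℝ) < 1 + p * (Real.exp t - 1) := by nlinarith
  have hprod : ∏ i, mgf (X i) μ t ≤ (1 + p * (Real.exp t - 1)) ^ n := by
    have hai_nonneg : ∀ i, (0:ℝ) ≤ 1 + m i * (Real.exp t - 1) := by
      intro i; nlinarith [hm0 i]
    have h1 : ∏ i, mgf (X i) μ t ≤ ∏ i, (1 + m i * (Real.exp t - 1)) :=
      Finset.prod_le_prod (fun i _ => hmgf_nonneg i) (fun i _ => hmgf_le i)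
    refine h1.trans ?_
    -- geometric mean ≤ arithmetic mean
    have hgm := Real.geom_mean_le_arith_mean_weighted Finset.univ
      (fun _ => (n : ℝ)⁻¹) (fun i => 1 + m i * (Real.exp t - 1))
      (fun i _ => by positivity)
      (by simp [Finset.sum_const, Finset.card_univ]; field_simp)
      (fun i _ => hai_nonneg i)
    have hsum_eq : ∑ i, (n:ℝ)⁻¹ * (1 + m i * (Real.exp t - 1))
        = 1 + p * (Real.exp t - 1) := by
      rw [← Finset.mul_sum, Finset.sum_add_distrib]
      simp only [Finset.sum_const, Finset.card_univ, Fintype.card_fin, nsmul_eq_mul, mul_one]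
      rw [← Finset.sum_mul, hmsum]
      field_simp
    rw [hsum_eq] at hgm
    have key : ∏ i, (1 + m i * (Real.exp t - 1))
        = (∏ i, (1 + m i * (Real.exp t - 1)) ^ ((n:ℝ)⁻¹)) ^ (n : ℕ) := by
      rw [← Finset.prod_pow]
      refine Finset.prod_congr rfl fun i _ => ?_
      rw [← Real.rpow_natCast ((1 + m i * (Real.exp t - 1)) ^ ((n:ℝ)⁻¹)) n,
        ← Real.rpow_mul (hai_nonneg i), inv_mul_cancel₀ hn, Real.rpow_one]
    rw [key]
    exact pow_le_pow_left₀ (Finset.prod_nonneg fun i _ =>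
      Real.rpow_nonneg (hai_nonneg i) _) hgm n
  -- Chernoff bound
  have hSmeas : Measurable fun ω => ∑ i, X i ω := by
    exact Finset.measurable_sum Finset.univ fun i _ => hX i
  have hSint : Integrable (fun ω => Real.exp (t * ∑ i, X i ω)) μ := by
    refine Integrable.mono' (integrable_const (Real.exp (t * n)))
      ((hSmeas.const_mul t).exp).aestronglyMeasurable ?_
    have hb : ∀ᵐ ω ∂μ, ∀ i, X i ω ∈ Set.Icc (0:ℝ) 1 := ae_all_iff.2 hbound
    filter_upwards [hb] with ω hω
    rw [Real.norm_eq_abs, abs_of_pos (Real.exp_pos _)]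
    refine Real.exp_le_exp.2 (mul_le_mul_of_nonneg_left ?_ ht.le)
    calc ∑ i, X i ω ≤ ∑ _i : Fin n, (1:ℝ) :=
          Finset.sum_le_sum fun i _ => (hω i).2
      _ = n := by simp
  have hchernoff := measure_ge_le_exp_mul_mgf (μ := μ) (X := fun ω => ∑ i, X i ω)
    ((p + h) * n) ht.le hSint
  have hmgfS : mgf (fun ω => ∑ i, X i ω) μ t = ∏ i, mgf (X i) μ t := by
    have : (fun ω => ∑ i, X i ω) = ∑ i, X i := by
      funext ω; simp [Finset.sum_apply]
    rw [this, hindep.mgf_sum hX]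
  rw [hmgfS] at hchernoff
  refine hchernoff.trans ?_
  -- now pure algebra
  have hstep : Real.exp (-t * ((p + h) * n)) * ∏ i, mgf (X i) μ t
      ≤ (Real.exp (-t * (p + h)) * (1 + p * (Real.exp t - 1))) ^ n := by
    rw [mul_pow, show -t * ((p+h) * n) = (n : ℕ) * (-t * (p+h)) by push_cast; ring,
      Real.exp_nat_mul]
    exact mul_le_mul_of_nonneg_left hprod (pow_nonneg (Real.exp_pos _).le n)
  refine hstep.trans (le_of_eq ?_)
  congr 1
  -- single-letter identity
  have h1 : 1 + p * (Real.exp t - 1) = (1 - p) / (1 - p - h) := by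
    rw [het]; field_simp; ring
  have h2 : Real.exp (-t * (p + h))
      = ((1 - p - h) * p / ((p + h) * (1 - p))) ^ (p + h) := by
    rw [show -t * (p + h) = t * (-(p+h)) by ring, Real.exp_mul, het,
      Real.rpow_neg (by positivity), ← Real.inv_rpow (by positivity)]
    congr 1
    rw [inv_div]
  rw [h1, h2]
  have e1 : (1 - p - h) * p / ((p + h) * (1 - p))
      = (p / (p + h)) * ((1 - p - h) / (1 - p)) := by
    field_simp
  rw [e1, Real.mul_rpow (by positivity) (by positivity)]
  have e2 : ((1 - p - h) / (1 - p)) ^ (p + h)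
      = ((1 - p) / (1 - p - h)) ^ (-(p + h)) := by
    rw [Real.rpow_neg (by positivity), ← Real.inv_rpow (by positivity), inv_div]
  rw [e2, mul_assoc]
  congr 1
  have hb : (0:ℝ) < (1 - p) / (1 - p - h) := by positivity
  calc ((1 - p) / (1 - p - h)) ^ (-(p + h)) * ((1 - p) / (1 - p - h))
      = ((1 - p) / (1 - p - h)) ^ (-(p + h)) * ((1 - p) / (1 - p - h)) ^ (1:ℝ) := by
        rw [Real.rpow_one]
    _ = ((1 - p) / (1 - p - h)) ^ (-(p + h) + 1) := (Real.rpow_add hb _ _).symm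
    _ = ((1 - p) / (1 - p - h)) ^ (1 - p - h) := by congr 1; ring
end

section
/- Let X_1, …, X_n be independent real-valued random variables with a_i ≤ X_i ≤ b_i almost surely for each i, where a_i < b_i for at least one i. Set S_n = X_1 + ⋯ + X_n and p = E[S_n]/n. Then for every h > 0, P(S_n ≥ (p+h)·n) ≤ exp( −2·n²·h² / ∑_{i=1}^{n} (b_i − a_i)² ). -/
open MeasureTheory ProbabilityTheory Real

lemma hoeff_key {p : ℝ} (hp0 : 0 ≤ p) (hp1 : p ≤ 1) {u : ℝ} (hu : 0 ≤ u) :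
    1 - p + p * exp u ≤ exp (p * u + u ^ 2 / 8) := by
  have hD : ∀ v : ℝ, 0 < 1 - p + p * exp v := by
    intro v
    rcases hp0.eq_or_lt with h | h
    · simp [← h]
    · have := mul_pos h (exp_pos v); linarith
  -- G v = p e^v / D v - p - v/4, antitone on [0,∞), G 0 = 0
  set D : ℝ → ℝ := fun v => 1 - p + p * exp v with hDdef
  have hDderiv : ∀ v, HasDerivAt D (p * exp v) v := fun v => by
    exact ((Real.hasDerivAt_exp v).const_mul p).const_add (1 - p)
  set G : ℝ → ℝ := fun v => p * exp v / D v - p - v / 4 with hGdef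
  have hGderiv : ∀ v, HasDerivAt G (p * exp v * (D v - p * exp v) / (D v) ^ 2 - 1 / 4) v := by
    intro v
    have h1 : HasDerivAt (fun w => p * exp w / D w)
        ((p * exp v * D v - p * exp v * (p * exp v)) / (D v) ^ 2) v :=
      ((Real.hasDerivAt_exp v).const_mul p).div (hDderiv v) (hD v).ne'
    have h2 : HasDerivAt (fun w : ℝ => w / 4) (1 / 4) v := by
      simpa using (hasDerivAt_id v).div_const 4
    refine ((h1.sub_const p).sub h2).congr_deriv ?_
    ring
  have hGderiv_nonpos : ∀ v, p * exp v * (D v - p * exp v) / (D v) ^ 2 - 1 / 4 ≤ 0 := by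
    intro v
    rw [sub_nonpos, div_le_iff₀ (pow_pos (hD v) 2)]
    have hx : 0 ≤ p * exp v := by positivity
    have : D v - p * exp v = 1 - p := by simp only [hDdef]; ring
    rw [this]
    nlinarith [sq_nonneg (1 - p - p * exp v)]
  have hGanti : AntitoneOn G (Set.Ici (0 : ℝ)) := by
    apply antitoneOn_of_deriv_nonpos (convex_Ici 0)
    · exact (Continuous.continuousOn (by
        exact continuous_iff_continuousAt.2 fun v => (hGderiv v).continuousAt))
    · intro v _; exact ((hGderiv v).differentiableAt).differentiableWithinAt
    · intro v _
      rw [(hGderiv v).deriv]; exact hGderiv_nonpos v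
  have hG0 : G 0 = 0 := by simp [hGdef, hDdef]
  have hGle : ∀ v, 0 ≤ v → G v ≤ 0 := fun v hv => by
    have := hGanti (Set.self_mem_Ici) (Set.mem_Ici.2 hv) hv
    rwa [hG0] at this
  -- F v = log (D v) - p v - v^2/8
  set F : ℝ → ℝ := fun v => Real.log (D v) - p * v - v ^ 2 / 8 with hFdef
  have hFderiv : ∀ v, HasDerivAt F (G v) v := by
    intro v
    have h1 : HasDerivAt (fun w => Real.log (D w)) (p * exp v / D v) v :=
      (hDderiv v).log (hD v).ne'
    have h2 : HasDerivAt (fun w : ℝ => p * w) p v := by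
      simpa using (hasDerivAt_id v).const_mul p
    have h3 : HasDerivAt (fun w : ℝ => w ^ 2 / 8) (2 * v / 8) v := by
      simpa using (hasDerivAt_pow 2 v).div_const 8
    refine ((h1.sub h2).sub h3).congr_deriv ?_
    simp [hGdef]; ring
  have hFanti : AntitoneOn F (Set.Ici (0 : ℝ)) := by
    apply antitoneOn_of_deriv_nonpos (convex_Ici 0)
    · exact (Continuous.continuousOn (by
        exact continuous_iff_continuousAt.2 fun v => (hFderiv v).continuousAt))
    · intro v _; exact ((hFderiv v).differentiableAt).differentiableWithinAt
    · intro v hv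
      rw [(hFderiv v).deriv]
      exact hGle v (le_of_lt (by simpa using hv))
  have hF0 : F 0 = 0 := by simp [hFdef, hDdef]
  have hFle : F u ≤ 0 := by
    have := hFanti (Set.self_mem_Ici) (Set.mem_Ici.2 hu) hu
    rwa [hF0] at this
  have : Real.log (D u) ≤ p * u + u ^ 2 / 8 := by simp [hFdef] at hFle; linarith
  calc 1 - p + p * exp u = exp (Real.log (D u)) := by rw [Real.exp_log (hD u)]
    _ ≤ _ := exp_le_exp.2 this

lemma hoeff_mgf {Ω : Type*} [MeasurableSpace Ω] (μ : Measure Ω) [IsProbabilityMeasure μ]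
    (Y : Ω → ℝ) (hY : Measurable Y) {a b : ℝ}
    (hb : ∀ᵐ ω ∂μ, Y ω ∈ Set.Icc a b) {t : ℝ} (ht : 0 ≤ t) :
    mgf Y μ t ≤ exp (t * (∫ ω, Y ω ∂μ) + t ^ 2 * (b - a) ^ 2 / 8) := by
  have hInt : Integrable Y μ := by
    refine Integrable.mono' (integrable_const (max |a| |b|)) hY.aestronglyMeasurable ?_
    filter_upwards [hb] with ω ⟨h1, h2⟩
    rw [Real.norm_eq_abs, abs_le]
    constructor
    · calc -(max |a| |b|) ≤ -|a| := by simp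
        _ ≤ a := neg_abs_le a
        _ ≤ Y ω := h1
    · calc Y ω ≤ b := h2
        _ ≤ |b| := le_abs_self b
        _ ≤ max |a| |b| := le_max_right _ _
  set m := ∫ ω, Y ω ∂μ with hm
  have ham : a ≤ m := by
    have : ∫ _ω, a ∂μ ≤ m := integral_mono_ae (integrable_const a) hInt
      (by filter_upwards [hb] with ω hω using hω.1)
    simpa using this
  have hmb : m ≤ b := by
    have : m ≤ ∫ _ω, b ∂μ := integral_mono_ae hInt (integrable_const b)
      (by filter_upwards [hb] with ω hω using hω.2)
    simpa using this
  rcases le_or_gt b a with hba | hba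
  · -- degenerate: a = b, Y = a a.e.
    have hYa : ∀ᵐ ω ∂μ, Y ω = a := by
      filter_upwards [hb] with ω ⟨h1, h2⟩
      exact le_antisymm (h2.trans hba) h1
    have hmgf : mgf Y μ t = exp (t * a) := by
      rw [mgf]
      rw [integral_congr_ae (g := fun _ => exp (t * a))
        (by filter_upwards [hYa] with ω hω; rw [hω])]
      simp
    have hma : m = a := le_antisymm (hmb.trans hba) ham
    rw [hmgf, hma]
    apply exp_le_exp.2
    nlinarith [sq_nonneg (t * (b - a))]
  · -- main case a < b
    have hba' : (0 : ℝ) < b - a := by linarith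
    have hIntExp : Integrable (fun ω => exp (t * Y ω)) μ := by
      refine Integrable.mono' (integrable_const (exp (t * b)))
        ((hY.const_mul t).exp).aestronglyMeasurable ?_
      filter_upwards [hb] with ω ⟨_, h2⟩
      rw [Real.norm_eq_abs, abs_of_pos (exp_pos _)]
      exact exp_le_exp.2 (mul_le_mul_of_nonneg_left h2 ht)
    set c : ℝ := (exp (t * b) - exp (t * a)) / (b - a) with hc
    set d : ℝ := (b * exp (t * a) - a * exp (t * b)) / (b - a) with hd
    have hfun : ∀ x : ℝ, ((b - x) * exp (t * a) + (x - a) * exp (t * b)) / (b - a)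
        = x * c + d := by
      intro x; rw [hc, hd]; field_simp; ring
    have hpt : ∀ᵐ ω ∂μ, exp (t * Y ω) ≤ Y ω * c + d := by
      filter_upwards [hb] with ω ⟨h1, h2⟩
      rw [← hfun (Y ω)]
      set x := Y ω
      have hθ : (0:ℝ) ≤ (b - x) / (b - a) := div_nonneg (by linarith) hba'.le
      have hη : (0:ℝ) ≤ (x - a) / (b - a) := div_nonneg (by linarith) hba'.le
      have hsum : (b - x) / (b - a) + (x - a) / (b - a) = 1 := by field_simp; ring
      have := convexOn_exp.2 (Set.mem_univ (t * a)) (Set.mem_univ (t * b)) hθ hη hsum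
      simp only [smul_eq_mul] at this
      have hx : (b - x) / (b - a) * (t * a) + (x - a) / (b - a) * (t * b) = t * x := by
        field_simp; ring
      rw [hx] at this
      calc exp (t * x) ≤ (b - x) / (b - a) * exp (t * a) + (x - a) / (b - a) * exp (t * b) :=
            this
        _ = ((b - x) * exp (t * a) + (x - a) * exp (t * b)) / (b - a) := by ring
    have hIntRHS : Integrable (fun ω => Y ω * c + d) μ :=
      (hInt.mul_const c).add (integrable_const d)
    have hmgf_le : mgf Y μ t ≤ m * c + d := by
      rw [mgf]
      calc ∫ ω, exp (t * Y ω) ∂μ ≤ ∫ ω, (Y ω * c + d) ∂μ :=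
            integral_mono_ae hIntExp hIntRHS hpt
        _ = m * c + d := by
            rw [integral_add (hInt.mul_const c) (integrable_const d),
              integral_mul_const]
            simp [hm]
    set q : ℝ := (m - a) / (b - a) with hq
    set u : ℝ := t * (b - a) with hu'
    have hkey := hoeff_key (p := q) (div_nonneg (by linarith) hba'.le)
      (by rw [hq, div_le_one hba']; linarith) (u := u) (mul_nonneg ht hba'.le)
    have hEb : exp (t * b) = exp (t * a) * exp u := by
      rw [← exp_add]; congr 1; rw [hu']; ring
    have heq1 : m * c + d = exp (t * a) * (1 - q + q * exp u) := by
      rw [hc, hd, hq, hEb]; field_simp; ring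
    calc mgf Y μ t ≤ m * c + d := hmgf_le
      _ = exp (t * a) * (1 - q + q * exp u) := heq1
      _ ≤ exp (t * a) * exp (q * u + u ^ 2 / 8) :=
          mul_le_mul_of_nonneg_left hkey (exp_pos _).le
      _ = exp (t * m + t ^ 2 * (b - a) ^ 2 / 8) := by
          rw [← exp_add]; congr 1; rw [hq, hu']; field_simp; ring


/-- Hoeffding (1963), Theorem 2 (right tail): for independent random variables with
`a_i ≤ X_i ≤ b_i` almost surely and `a_i < b_i` for at least one `i`, with
`p = E[S_n]/n` and `h > 0`,
`P(S_n ≥ (p+h)·n) ≤ exp(-2·n²·h² / ∑ (b_i - a_i)²)`. -/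
theorem hoeffding_theorem_two_right {Ω : Type*} [MeasurableSpace Ω] (μ : Measure Ω)
    [IsProbabilityMeasure μ] (n : ℕ) (X : Fin n → Ω → ℝ)
    (hX : ∀ i, Measurable (X i))
    (hindep : iIndepFun X μ)
    (a b : Fin n → ℝ)
    (hbound : ∀ i, ∀ᵐ ω ∂μ, X i ω ∈ Set.Icc (a i) (b i))
    (hab : ∃ i, a i < b i)
    (p : ℝ) (hp : p = (∫ ω, ∑ i, X i ω ∂μ) / n)
    (h : ℝ) (hh : 0 < h) :
    (μ {ω | (p + h) * n ≤ ∑ i, X i ω}).toReal ≤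
      Real.exp (-2 * (n : ℝ) ^ 2 * h ^ 2 / ∑ i, (b i - a i) ^ 2) := by
  obtain ⟨i₀, hi₀⟩ := hab
  set C : ℝ := ∑ i, (b i - a i) ^ 2 with hCdef
  have hC : 0 < C := by
    rw [hCdef]
    have h1 : (b i₀ - a i₀) ^ 2 ≤ ∑ i, (b i - a i) ^ 2 :=
      Finset.single_le_sum (f := fun i => (b i - a i) ^ 2)
        (fun i _ => sq_nonneg _) (Finset.mem_univ i₀)
    have h2 : (0:ℝ) < (b i₀ - a i₀) ^ 2 := pow_pos (sub_pos.2 hi₀) 2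
    linarith
  have hn : (0:ℝ) < n := by exact_mod_cast i₀.pos
  have hInt : ∀ i, Integrable (X i) μ := by
    intro i
    refine Integrable.mono' (integrable_const (max |a i| |b i|))
      (hX i).aestronglyMeasurable ?_
    filter_upwards [hbound i] with ω ⟨h1, h2⟩
    rw [Real.norm_eq_abs, abs_le]
    refine ⟨?_, ?_⟩
    · calc -(max |a i| |b i|) ≤ -|a i| := by simp
        _ ≤ a i := neg_abs_le _
        _ ≤ X i ω := h1
    · calc X i ω ≤ b i := h2
        _ ≤ |b i| := le_abs_self _
        _ ≤ max |a i| |b i| := le_max_right _ _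
  set m : Fin n → ℝ := fun i => ∫ ω, X i ω ∂μ with hmdef
  have hM : (∫ ω, ∑ i, X i ω ∂μ) = ∑ i, m i :=
    integral_finset_sum _ (fun i _ => hInt i)
  have hpn : (p + h) * n = (∑ i, m i) + h * n := by
    rw [hp, hM]; field_simp
  set t : ℝ := 4 * h * n / C with htdef
  have ht : 0 ≤ t := by positivity
  have hIntExp : ∀ i, Integrable (fun ω => exp (t * X i ω)) μ := by
    intro i
    refine Integrable.mono' (integrable_const (exp (t * b i)))
      ((hX i).const_mul t).exp.aestronglyMeasurable ?_
    filter_upwards [hbound i] with ω ⟨_, h2⟩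
    rw [Real.norm_eq_abs, abs_of_pos (exp_pos _)]
    exact exp_le_exp.2 (mul_le_mul_of_nonneg_left h2 ht)
  have hIntS : Integrable (fun ω => exp (t * (∑ i, X i) ω)) μ :=
    hindep.integrable_exp_mul_sum hX (fun i _ => hIntExp i)
  have hset : {ω | (p + h) * n ≤ ∑ i, X i ω} = {ω | (p + h) * n ≤ (∑ i, X i) ω} := by
    ext ω; simp [Finset.sum_apply]
  have hchern := measure_ge_le_exp_mul_mgf (X := ∑ i, X i) (μ := μ)
    ((p + h) * n) ht hIntS
  rw [hset]
  refine hchern.trans ?_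
  have hprod : mgf (∑ i, X i) μ t = ∏ i, mgf (X i) μ t := hindep.mgf_sum hX _
  have hmgf_le : mgf (∑ i, X i) μ t ≤ exp (∑ i, (t * m i + t ^ 2 * (b i - a i) ^ 2 / 8)) := by
    rw [hprod, Real.exp_sum]
    exact Finset.prod_le_prod (fun i _ => mgf_nonneg)
      (fun i _ => hoeff_mgf μ (X i) (hX i) (hbound i) ht)
  calc exp (-t * ((p + h) * n)) * mgf (∑ i, X i) μ t
      ≤ exp (-t * ((p + h) * n)) * exp (∑ i, (t * m i + t ^ 2 * (b i - a i) ^ 2 / 8)) :=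
        mul_le_mul_of_nonneg_left hmgf_le (exp_pos _).le
    _ = exp (-2 * (n : ℝ) ^ 2 * h ^ 2 / C) := by
        rw [← exp_add]
        congr 1
        rw [hpn, Finset.sum_add_distrib, ← Finset.mul_sum]
        have hsum : (∑ x : Fin n, t ^ 2 * (b x - a x) ^ 2 / 8) = t ^ 2 * C / 8 := by
          rw [hCdef, Finset.mul_sum, Finset.sum_div]
        rw [hsum, htdef]
        field_simp
        ring
end
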